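/- arXiv:1004.1365 — 3 statements merged into one kernel-verified Lean document; each statement's English description precedes it below -/
import Mathlib

section
/- Let X be a topological space and let Y be a complete Hausdorff topological vector space over ℝ. If Φ is a nontrivial (NeBot) filter on the space C(X,Y) of continuous maps from X to Y that is continuously Cauchy at every point of X, then there exists a continuous map f : X → Y such that Φ converges continuously to f. (This is the paper's Theorem 1 — completeness of C_c(X,Y) — stated for topological X: every continuously Cauchy filter has a continuous-convergence limit in C(X,Y).) -/
/-!
Completeness of `Y` gives a pointwise limit `f` of `Φ`. Continuous Cauchyness at `x`, applied
with one fixed continuous `h₀` close to all `g` of some member of `Φ`, makes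
`g p - g x = (g p - h₀ p) + (h₀ p - h₀ x) + (h₀ x - g x)` small for `p` near `x` and `g` in `Φ`;
this upgrades pointwise convergence to continuous convergence. A continuous-convergence limit
into a regular space is continuous, since the closed neighbourhoods of `f x` pass to pointwise
limits.
-/

open Filter Topology

section

variable {X Y : Type*} [TopologicalSpace X]

theorem continuous_of_tendsto_nhds_prod [TopologicalSpace Y] [RegularSpace Y] {ι : Type*}
    {l : Filter ι} [l.NeBot] (φ : ι → X → Y) {f : X → Y}
    (h : ∀ x, Tendsto (fun q : X × ι => φ q.2 q.1) (𝓝 x ×ˢ l) (𝓝 (f x))) : Continuous f := by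
  have pointwise (x : X) : Tendsto (fun i => φ i x) l (𝓝 (f x)) :=
    (h x).comp (tendsto_const_nhds.prodMk tendsto_id)
  refine continuous_iff_continuousAt.2 fun x => (closed_nhds_basis (f x)).tendsto_right_iff.2 ?_
  rintro W ⟨hW, hWc⟩
  exact ((h x).eventually hW).curry.mono fun p hp => hWc.mem_of_tendsto (pointwise p) hp

def ContinuouslyCauchyAt [TopologicalSpace Y] [AddGroup Y] (Φ : Filter C(X, Y)) (x : X) : Prop :=
  Tendsto (fun p : X × (C(X, Y) × C(X, Y)) => p.2.1 p.1 - p.2.2 p.1) (𝓝 x ×ˢ (Φ ×ˢ Φ)) (𝓝 0)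

theorem ContinuouslyCauchyAt.cauchy_map_eval [UniformSpace Y] [AddGroup Y] [IsUniformAddGroup Y]
    {Φ : Filter C(X, Y)} [Φ.NeBot] {x : X} (h : ContinuouslyCauchyAt Φ x) :
    Cauchy (Φ.map fun g => g x) :=
  (IsUniformAddGroup.cauchy_map_iff_tendsto Φ fun g => g x).2
    ⟨‹_›, h.comp (tendsto_const_nhds.prodMk tendsto_id)⟩

theorem ContinuouslyCauchyAt.tendsto_sub_eval [TopologicalSpace Y] [AddGroup Y]
    [IsTopologicalAddGroup Y] {Φ : Filter C(X, Y)} [Φ.NeBot] {x : X}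
    (h : ContinuouslyCauchyAt Φ x) :
    Tendsto (fun q : X × C(X, Y) => q.2 q.1 - q.2 x) (𝓝 x ×ˢ Φ) (𝓝 0) := by
  intro U hU
  obtain ⟨V, hV, hVU⟩ := exists_nhds_zero_quarter hU
  obtain ⟨A, hA, S, hS, hAS⟩ := mem_prod_iff.1 (h hV)
  obtain ⟨T, hT, hTS⟩ := mem_prod_self_iff.1 hS
  have close : ∀ p ∈ A, ∀ g₁ ∈ T, ∀ g₂ ∈ T, g₁ p - g₂ p ∈ V := fun p hp g₁ hg₁ g₂ hg₂ =>
    hAS (Set.mk_mem_prod hp (hTS (Set.mk_mem_prod hg₁ hg₂)))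
  obtain ⟨h₀, hh₀⟩ := nonempty_of_mem hT
  have h₀_cont : ∀ᶠ p in 𝓝 x, h₀ p - h₀ x ∈ V :=
    (h₀.continuous.tendsto x).sub_const (h₀ x) (by rwa [sub_self])
  refine mem_map.2 (mem_of_superset (prod_mem_prod (inter_mem hA h₀_cont) hT) ?_)
  rintro ⟨p, g⟩ ⟨⟨hpA, hp⟩, hg⟩
  have hsplit := hVU (close p hpA g hg h₀ hh₀) hp (close x (mem_of_mem_nhds hA) h₀ hh₀ g hg)
    (mem_of_mem_nhds hV)
  simpa only [Set.mem_preimage, add_zero, sub_add_sub_cancel] using hsplit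

theorem tendsto_eval_of_tendsto_sub_eval [TopologicalSpace Y] [AddGroup Y] [ContinuousAdd Y]
    {Φ : Filter C(X, Y)} {x : X} {y : Y}
    (hequi : Tendsto (fun q : X × C(X, Y) => q.2 q.1 - q.2 x) (𝓝 x ×ˢ Φ) (𝓝 0))
    (hpt : Tendsto (fun g : C(X, Y) => g x) Φ (𝓝 y)) :
    Tendsto (fun q : X × C(X, Y) => q.2 q.1) (𝓝 x ×ˢ Φ) (𝓝 y) := by
  simpa using hequi.add (hpt.comp tendsto_snd)

end

theorem completeness_of_Cc_tvs_general
    {X : Type*} [TopologicalSpace X]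
    {Y : Type*} [AddCommGroup Y] [UniformSpace Y] [IsUniformAddGroup Y]
    [CompleteSpace Y]
    (Φ : Filter C(X, Y)) [Φ.NeBot]
    (hΦ : ∀ x : X,
      Filter.map (fun p : X × (C(X, Y) × C(X, Y)) => p.2.1 p.1 - p.2.2 p.1)
        (nhds x ×ˢ (Φ ×ˢ Φ)) ≤ nhds 0) :
    ∃ f : C(X, Y), ∀ x : X,
      Filter.map (fun p : X × C(X, Y) => p.2 p.1) (nhds x ×ˢ Φ) ≤ nhds (f x) := by
  have hcc (x : X) : ContinuouslyCauchyAt Φ x := hΦ x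
  choose f hf using fun x => CompleteSpace.complete (hcc x).cauchy_map_eval
  have conv (x : X) : Tendsto (fun q : X × C(X, Y) => q.2 q.1) (𝓝 x ×ˢ Φ) (𝓝 (f x)) :=
    tendsto_eval_of_tendsto_sub_eval (hcc x).tendsto_sub_eval (hf x)
  exact ⟨⟨f, continuous_of_tendsto_nhds_prod (fun g : C(X, Y) => ⇑g) conv⟩, conv⟩

/-- Theorem 1: if `Y` is a complete Hausdorff topological vector space over `ℝ`
(with its canonical uniform structure), then every continuously Cauchy filter on
`C(X, Y)` converges continuously to some continuous map `f : X → Y`. -/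
theorem completeness_of_Cc_tvs
    {X : Type*} [TopologicalSpace X]
    {Y : Type*} [AddCommGroup Y] [Module ℝ Y] [UniformSpace Y] [IsUniformAddGroup Y]
    [ContinuousSMul ℝ Y] [CompleteSpace Y] [T2Space Y]
    (Φ : Filter C(X, Y)) [Φ.NeBot]
    (hΦ : ∀ x : X,
      Filter.map (fun p : X × (C(X, Y) × C(X, Y)) => p.2.1 p.1 - p.2.2 p.1)
        (nhds x ×ˢ (Φ ×ˢ Φ)) ≤ nhds 0) :
    ∃ f : C(X, Y), ∀ x : X,
      Filter.map (fun p : X × C(X, Y) => p.2 p.1) (nhds x ×ˢ Φ) ≤ nhds (f x) :=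
  completeness_of_Cc_tvs_general Φ hΦ
end

section
/- Let X and Y be topological vector spaces over ℝ, with Y complete and Hausdorff. If Φ is a nontrivial (NeBot) filter on the space of continuous linear maps X →L[ℝ] Y that is continuously Cauchy at every point of X (with respect to the evaluation of continuous linear maps), then there exists a continuous linear map g : X →L[ℝ] Y such that Φ converges continuously to g, i.e. for every x ∈ X the pushforward of 𝓝(x) ×ˢ Φ under the map (p, T) ↦ T p converges to g x in Y. (This is the paper's Corollary — completeness of L_c(X,Y) when Y is a complete Hausdorff topological vector space — stated for topological X.) -/
/-!
Evaluating the maps of `Φ` gives a family of functions `X → Y` which, by hypothesis, is uniformly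
Cauchy on a neighbourhood of every point. Completeness of `Y` yields a pointwise limit `g`; the
convergence is then locally uniform, so `g` is continuous, it is linear as a pointwise limit of
linear maps, and locally uniform convergence to a continuous limit is continuous convergence.
-/

open Filter Topology

section UniformCauchy

variable {ι α : Type*} {p : Filter ι} {p' : Filter α}

theorem uniformCauchySeqOnFilter_of_tendsto_sub {G : Type*} [UniformSpace G] [AddGroup G]
    [IsUniformAddGroup G] {F : ι → α → G}
    (h : Tendsto (fun q : α × ι × ι => F q.2.1 q.1 - F q.2.2 q.1) (p' ×ˢ (p ×ˢ p)) (𝓝 0)) :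
    UniformCauchySeqOnFilter F p p' := by
  have hswap : Tendsto (fun m : (ι × ι) × α => (m.2, m.1.2, m.1.1))
      ((p ×ˢ p) ×ˢ p') (p' ×ˢ (p ×ˢ p)) :=
    tendsto_snd.prodMk ((tendsto_snd.comp tendsto_fst).prodMk (tendsto_fst.comp tendsto_fst))
  have hsub := h.comp hswap
  intro u hu
  rw [uniformity_eq_comap_nhds_zero G] at hu
  obtain ⟨V, hV, hVu⟩ := hu
  exact mem_of_superset (hsub hV) fun m hm => hVu hm

variable {β : Type*} [UniformSpace β] {F : ι → α → β}

theorem UniformCauchySeqOnFilter.cauchy_map [p.NeBot] (hF : UniformCauchySeqOnFilter F p p')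
    {x : α} (hx : pure x ≤ p') : Cauchy (p.map fun i => F i x) := by
  refine cauchy_map_iff'.2 fun u hu => ?_
  have := hF.mono_right hx u hu
  rwa [prod_pure, eventually_map] at this

theorem TendstoLocallyUniformly.tendsto_nhds_prod {f : α → β} [TopologicalSpace α]
    (h : TendstoLocallyUniformly F f p) {x : α} (hf : ContinuousAt f x) :
    Tendsto (fun q : α × ι => F q.2 q.1) (𝓝 x ×ˢ p) (𝓝 (f x)) :=
  tendsto_comp_of_locally_uniform_limit (F := fun q : α × ι => F q.2) hf tendsto_fst
    fun u hu => let ⟨t, ht, hev⟩ := h u hu x; ⟨t, ht, tendsto_snd.eventually hev⟩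

end UniformCauchy

theorem completeness_of_Lc_general
    {X : Type*} [AddCommGroup X] [Module ℝ X] [TopologicalSpace X]
    {Y : Type*} [AddCommGroup Y] [Module ℝ Y] [UniformSpace Y] [IsUniformAddGroup Y]
    [ContinuousSMul ℝ Y] [CompleteSpace Y] [T2Space Y]
    (Φ : Filter (X →L[ℝ] Y)) [Φ.NeBot]
    (hΦ : ∀ x : X,
      Filter.map (fun p : X × ((X →L[ℝ] Y) × (X →L[ℝ] Y)) => p.2.1 p.1 - p.2.2 p.1)
        (nhds x ×ˢ (Φ ×ˢ Φ)) ≤ nhds 0) :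
    ∃ g : X →L[ℝ] Y, ∀ x : X,
      Filter.map (fun p : X × (X →L[ℝ] Y) => p.2 p.1) (nhds x ×ˢ Φ) ≤ nhds (g x) := by
  set F : (X →L[ℝ] Y) → X → Y := fun T p => T p
  have hcauchy (x : X) : UniformCauchySeqOnFilter F Φ (𝓝 x) :=
    uniformCauchySeqOnFilter_of_tendsto_sub (hΦ x)
  choose f hf using fun x => CompleteSpace.complete ((hcauchy x).cauchy_map (pure_le_nhds x))
  have hloc : TendstoLocallyUniformly F f Φ := tendstoLocallyUniformly_iff_filter.2 fun x =>
    (hcauchy x).tendstoUniformlyOnFilter_of_tendsto (Eventually.of_forall hf)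
  have hcont : Continuous f :=
    hloc.continuous (Frequently.of_forall fun T => T.continuous)
  let g : X →L[ℝ] Y :=
    ⟨linearMapOfTendsto f (fun T : X →L[ℝ] Y => (T : X →ₗ[ℝ] Y)) (tendsto_pi_nhds.2 hf), hcont⟩
  exact ⟨g, fun x => hloc.tendsto_nhds_prod hcont.continuousAt⟩

/-- Corollary: if `X` and `Y` are topological vector spaces over `ℝ` with `Y`
complete and Hausdorff, then every continuously Cauchy filter on `X →L[ℝ] Y`
converges continuously to some continuous linear map `g : X →L[ℝ] Y`. -/
theorem completeness_of_Lc
    {X : Type*} [AddCommGroup X] [Module ℝ X] [TopologicalSpace X]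
    [IsTopologicalAddGroup X] [ContinuousSMul ℝ X]
    {Y : Type*} [AddCommGroup Y] [Module ℝ Y] [UniformSpace Y] [IsUniformAddGroup Y]
    [ContinuousSMul ℝ Y] [CompleteSpace Y] [T2Space Y]
    (Φ : Filter (X →L[ℝ] Y)) [Φ.NeBot]
    (hΦ : ∀ x : X,
      Filter.map (fun p : X × ((X →L[ℝ] Y) × (X →L[ℝ] Y)) => p.2.1 p.1 - p.2.2 p.1)
        (nhds x ×ˢ (Φ ×ˢ Φ)) ≤ nhds 0) :
    ∃ g : X →L[ℝ] Y, ∀ x : X,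
      Filter.map (fun p : X × (X →L[ℝ] Y) => p.2 p.1) (nhds x ×ˢ Φ) ≤ nhds (g x) :=
  completeness_of_Lc_general Φ hΦ
end

section
/- Let X be a topological space, let Y be a Hausdorff commutative topological additive group, and let Φ be a nontrivial (NeBot) filter on the space C(X,Y) of continuous maps from X to Y that is continuously Cauchy at every point of X. Suppose f : X → Y is a continuous map such that for every x ∈ X the pushforward of Φ under the evaluation map g ↦ g x converges to f x in Y. Then Φ converges continuously to f: for every x ∈ X, the pushforward of 𝓝(x) ×ˢ Φ under the evaluation map (p, g) ↦ g p converges to f x in Y. -/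
/-!
Since `Y` is regular, it suffices to show that `g p - f p` eventually lies in every closed
neighbourhood `C` of `0`. Continuous Cauchyness puts `g p - h p` in `C` for `p` near `x` and
`g`, `h` in `Φ`-large sets; fixing such `p` and `g` and letting `h → f` pointwise along `Φ`
gives `g p - f p ∈ C` because `C` is closed. Continuity of `f` then moves `f p` to `f x`.
-/

open Topology Filter

theorem tendsto_sub_of_cauchy_of_tendsto
    {α β Y : Type*} [AddCommGroup Y] [TopologicalSpace Y] [IsTopologicalAddGroup Y]
    {l : Filter α} {Φ : Filter β} [Φ.NeBot] {G : α → β → Y} {L : α → Y}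
    (hcauchy : Tendsto (fun q : α × β × β => G q.1 q.2.1 - G q.1 q.2.2) (l ×ˢ (Φ ×ˢ Φ)) (𝓝 0))
    (hlim : ∀ a, Tendsto (G a) Φ (𝓝 (L a))) :
    Tendsto (fun q : α × β => G q.1 q.2 - L q.1) (l ×ˢ Φ) (𝓝 0) := by
  rw [(closed_nhds_basis (0 : Y)).tendsto_right_iff]
  rintro C ⟨hC, hCclosed⟩
  have hcauchyC : ∀ᶠ q in (l ×ˢ Φ) ×ˢ Φ, G q.1.1 q.1.2 - G q.1.1 q.2 ∈ C := by
    rw [← prod_assoc_symm]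
    exact hcauchy hC
  filter_upwards [hcauchyC.curry] with ⟨a, g⟩ hg
  exact hCclosed.mem_of_tendsto ((hlim a).const_sub (G a g)) hg

theorem pointwise_limit_continuous_convergence_general
    {X : Type*} [TopologicalSpace X]
    {Y : Type*} [AddCommGroup Y] [TopologicalSpace Y] [IsTopologicalAddGroup Y]
    (Φ : Filter C(X, Y)) [Φ.NeBot]
    (hΦ : ∀ x : X,
      Filter.map (fun p : X × (C(X, Y) × C(X, Y)) => p.2.1 p.1 - p.2.2 p.1)
        (nhds x ×ˢ (Φ ×ˢ Φ)) ≤ nhds 0)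
    (f : X → Y) (hf : Continuous f)
    (hlim : ∀ x : X, Filter.map (fun g : C(X, Y) => g x) Φ ≤ nhds (f x)) :
    ∀ x : X,
      Filter.map (fun p : X × C(X, Y) => p.2 p.1) (nhds x ×ˢ Φ) ≤ nhds (f x) := by
  intro x
  change Tendsto _ _ _
  have hdiff : Tendsto (fun p : X × C(X, Y) => p.2 p.1 - f p.1) (𝓝 x ×ˢ Φ) (𝓝 0) :=
    tendsto_sub_of_cauchy_of_tendsto (G := fun (p : X) (g : C(X, Y)) => g p) (hΦ x) hlim
  have hfx : Tendsto (fun p : X × C(X, Y) => f p.1) (𝓝 x ×ˢ Φ) (𝓝 (f x)) :=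
    (hf.tendsto x).comp tendsto_fst
  simpa only [sub_add_cancel, zero_add] using hdiff.add hfx

/-- If a continuously Cauchy filter on `C(X, Y)`, with `Y` a Hausdorff commutative
topological additive group, converges pointwise to a continuous map `f`, then it
converges continuously to `f`. -/
theorem pointwise_limit_continuous_convergence
    {X : Type*} [TopologicalSpace X]
    {Y : Type*} [AddCommGroup Y] [TopologicalSpace Y] [IsTopologicalAddGroup Y] [T2Space Y]
    (Φ : Filter C(X, Y)) [Φ.NeBot]
    (hΦ : ∀ x : X,
      Filter.map (fun p : X × (C(X, Y) × C(X, Y)) => p.2.1 p.1 - p.2.2 p.1)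
        (nhds x ×ˢ (Φ ×ˢ Φ)) ≤ nhds 0)
    (f : X → Y) (hf : Continuous f)
    (hlim : ∀ x : X, Filter.map (fun g : C(X, Y) => g x) Φ ≤ nhds (f x)) :
    ∀ x : X,
      Filter.map (fun p : X × C(X, Y) => p.2 p.1) (nhds x ×ˢ Φ) ≤ nhds (f x) :=
  pointwise_limit_continuous_convergence_general Φ hΦ f hf hlim
end
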